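/- arXiv:1812.10837 — 4 statements merged into one kernel-verified Lean document; each statement's English description precedes it below -/
import Mathlib

section
/- Suppose a sequence of nonnegative integer delays d_1, ..., d_k and positive integer walk lengths λ_1, ..., λ_k satisfies d_1 = 0 and d_i ≤ 1 + max_{h < i}(d_h + λ_h) for each i ≥ 2. Then for all i, d_i ≤ 2·∑_{h < i} λ_h. -/
theorem stmt_7 (k : ℕ) (d lam : Fin k → ℕ)
    (hlam : ∀ i, 1 ≤ lam i)
    (h0 : ∀ i : Fin k, (i : ℕ) = 0 → d i = 0)
    (hstep : ∀ i : Fin k, 0 < (i : ℕ) →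
      d i ≤ 1 + (Finset.univ.filter (· < i)).sup fun h => d h + lam h) :
    ∀ i : Fin k, d i ≤ 2 * ∑ h ∈ Finset.univ.filter (· < i), lam h := by
  suffices H : ∀ n : ℕ, ∀ i : Fin k, (i : ℕ) ≤ n →
      d i ≤ 2 * ∑ h ∈ Finset.univ.filter (· < i), lam h by
    exact fun i => H i i le_rfl
  intro n
  induction n with
  | zero =>
    intro i hin
    simp [h0 i (Nat.le_zero.mp hin)]
  | succ n IHn =>
    intro i hin
    have IH : ∀ h : Fin k, h < i →
        d h ≤ 2 * ∑ x ∈ Finset.univ.filter (· < h), lam x := by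
      intro h hh
      have : (h:ℕ) < (i:ℕ) := hh
      exact IHn h (by omega)
    rcases Nat.eq_zero_or_pos (i : ℕ) with hi | hi
    · simp [h0 i hi]
    · have key : ∀ h ∈ Finset.univ.filter (· < i),
          d h + lam h + 1 ≤ 2 * ∑ x ∈ Finset.univ.filter (· < i), lam x := by
        intro h hh
        simp only [Finset.mem_filter, Finset.mem_univ, true_and] at hh
        have hIH := IH h hh
        have hsub : Finset.univ.filter (· ≤ h) ⊆ Finset.univ.filter (· < i) := by
          intro x hx
          simp only [Finset.mem_filter, Finset.mem_univ, true_and] at hx ⊢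
          exact lt_of_le_of_lt hx hh
        have hins : Finset.univ.filter (· ≤ h) = insert h (Finset.univ.filter (· < h)) := by
          ext x
          simp [le_iff_lt_or_eq, or_comm]
        have hnm : h ∉ Finset.univ.filter (· < h) := by simp
        have hsum : ∑ x ∈ Finset.univ.filter (· ≤ h), lam x
            = lam h + ∑ x ∈ Finset.univ.filter (· < h), lam x := by
          rw [hins, Finset.sum_insert hnm]
        have hle : ∑ x ∈ Finset.univ.filter (· ≤ h), lam x
            ≤ ∑ x ∈ Finset.univ.filter (· < i), lam x :=
          Finset.sum_le_sum_of_subset hsub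
        have := hlam h
        omega
      have hne : ∃ h, h ∈ Finset.univ.filter (· < i) := by
        refine ⟨⟨0, lt_of_le_of_lt (Nat.zero_le _) i.isLt⟩, ?_⟩
        simp only [Finset.mem_filter, Finset.mem_univ, true_and, Fin.lt_def]
        exact hi
      obtain ⟨h0', hh0⟩ := hne
      have hS1 : 1 ≤ 2 * ∑ x ∈ Finset.univ.filter (· < i), lam x := by
        have := key h0' hh0
        omega
      have hsup : (Finset.univ.filter (· < i)).sup (fun h => d h + lam h)
          ≤ 2 * (∑ x ∈ Finset.univ.filter (· < i), lam x) - 1 := by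
        apply Finset.sup_le
        intro h hh
        have := key h hh
        omega
      have := hstep i hi
      omega
end

section
/- Let a_1,...,a_k ∈ ℤ≥0; among all injective functions y : [k] → ℤ≥0 with y(i) ≥ a_i for all i, any y minimizing ∑_i y(i) has image equal to the image of any other minimizer. -/
open Finset

/-- Key exchange lemma: if `y` is a min-sum injective feasible assignment, there
cannot be a slot `m` used by `y` but not by `y'` that dominates all slots used
by `y'` but not by `y`. -/
theorem key_exchange {k : ℕ} (a y y' : Fin k → ℕ)
    (hy : Function.Injective y) (hy' : Function.Injective y')
    (ha : ∀ i, a i ≤ y i) (ha' : ∀ i, a i ≤ y' i)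
    (hmin : ∀ z : Fin k → ℕ, Function.Injective z → (∀ i, a i ≤ z i) →
      ∑ i, y i ≤ ∑ i, z i)
    (m : ℕ) (hmS : m ∈ Finset.univ.image y) (hmT : m ∉ Finset.univ.image y')
    (hmax : ∀ t ∈ Finset.univ.image y', t ∉ Finset.univ.image y → t < m) :
    False := by
  classical
  obtain ⟨i0, -, hi0⟩ := Finset.mem_image.mp hmS
  -- the "next" step of the augmenting chain
  set next : Fin k → Fin k := fun i =>
    if h : ∃ j, y j = y' i then h.choose else i with hnext_def
  have hnext : ∀ i, (∃ j, y j = y' i) → y (next i) = y' i := by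
    intro i h
    simp only [hnext_def, dif_pos h]
    exact h.choose_spec
  set seq : ℕ → Fin k := fun n => next^[n] i0 with hseq_def
  have hseq0 : seq 0 = i0 := rfl
  have hseqS : ∀ n, seq (n + 1) = next (seq n) := by
    intro n
    simp [hseq_def, Function.iterate_succ_apply']
  -- "Alive j": the slot y'(seq j) is also used by y
  set Alive : ℕ → Prop := fun j => ∃ p, y p = y' (seq j) with hAlive_def
  have hstep : ∀ j, Alive j → y (seq (j + 1)) = y' (seq j) := by
    intro j hj
    rw [hseqS]
    exact hnext _ hj
  -- distinctness along the chain while alive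
  have dist : ∀ p q : ℕ, (∀ j, j < q → Alive j) → p < q → seq p ≠ seq q := by
    intro p
    induction p with
    | zero =>
      intro q halive hpq heq
      obtain ⟨r, rfl⟩ : ∃ r, q = r + 1 := ⟨q - 1, by omega⟩
      have h1 : y (seq (r + 1)) = y' (seq r) := hstep r (halive r (by omega))
      apply hmT
      rw [Finset.mem_image]
      exact ⟨seq r, Finset.mem_univ _, by rw [← h1, ← heq, hseq0, hi0]⟩
    | succ p ih =>
      intro q halive hpq heq
      obtain ⟨r, rfl⟩ : ∃ r, q = r + 1 := ⟨q - 1, by omega⟩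
      have h1 : y (seq (r + 1)) = y' (seq r) := hstep r (halive r (by omega))
      have h2 : y (seq (p + 1)) = y' (seq p) := hstep p (halive p (by omega))
      have : seq p = seq r := hy' (by rw [← h1, ← h2, heq])
      exact ih r (fun j hj => halive j (by omega)) (by omega) this
  -- the chain must eventually die
  have hdead : ∃ n, ¬ Alive n := by
    by_contra h
    push_neg at h
    have hinj : Function.Injective (fun t : Fin (k + 1) => seq t.val) := by
      intro p q hpq
      by_contra hne
      rcases lt_or_gt_of_ne hne with hlt | hlt
      · exact dist p.val q.val (fun j _ => h j) (by exact_mod_cast hlt) hpq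
      · exact dist q.val p.val (fun j _ => h j) (by exact_mod_cast hlt) hpq.symm
    have := Fintype.card_le_of_injective _ hinj
    simp at this
  set n := Nat.find hdead with hn_def
  have hn : ¬ Alive n := Nat.find_spec hdead
  have halive : ∀ j, j < n → Alive j := by
    intro j hj
    by_contra hc
    exact Nat.find_min hdead hj hc
  -- endpoints
  set w := y' (seq n) with hw_def
  have hwS : w ∉ Finset.univ.image y := by
    intro hc
    obtain ⟨p, -, hp⟩ := Finset.mem_image.mp hc
    exact hn ⟨p, hp⟩
  have hwT : w ∈ Finset.univ.image y' :=
    Finset.mem_image.mpr ⟨seq n, Finset.mem_univ _, rfl⟩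
  have hw_lt : w < m := hmax w hwT hwS
  -- the chain set
  set C : Finset (Fin k) := (Finset.range (n + 1)).image seq with hC_def
  have hmemC : ∀ i, i ∈ C ↔ ∃ j ≤ n, seq j = i := by
    intro i
    simp [hC_def, Finset.mem_image, Finset.mem_range, Nat.lt_succ_iff]
  have distC : ∀ p ≤ n, ∀ q ≤ n, seq p = seq q → p = q := by
    intro p hp q hq heq
    by_contra hne
    rcases lt_or_gt_of_ne hne with hlt | hlt
    · exact dist p q (fun j hj => halive j (by omega)) hlt heq
    · exact dist q p (fun j hj => halive j (by omega)) hlt heq.symm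
  -- the common middle part
  set D : Finset ℕ := ((Finset.Icc 1 n).image seq).image y with hD_def
  have hDmem : ∀ x, x ∈ D ↔ ∃ j, 1 ≤ j ∧ j ≤ n ∧ y (seq j) = x := by
    intro x
    simp only [hD_def, Finset.mem_image, Finset.mem_Icc]
    constructor
    · rintro ⟨i, ⟨j, ⟨h1, h2⟩, rfl⟩, rfl⟩; exact ⟨j, h1, h2, rfl⟩
    · rintro ⟨j, h1, h2, rfl⟩; exact ⟨seq j, ⟨j, ⟨h1, h2⟩, rfl⟩, rfl⟩
  have himy : C.image y = insert m D := by
    ext x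
    simp only [Finset.mem_image, Finset.mem_insert, hDmem]
    constructor
    · rintro ⟨i, hi, rfl⟩
      obtain ⟨j, hj, rfl⟩ := (hmemC i).mp hi
      rcases Nat.eq_zero_or_pos j with rfl | hj0
      · left; rw [hseq0, hi0]
      · right; exact ⟨j, hj0, hj, rfl⟩
    · rintro (rfl | ⟨j, h1, h2, rfl⟩)
      · exact ⟨seq 0, (hmemC _).mpr ⟨0, by omega, rfl⟩, by rw [hseq0, hi0]⟩
      · exact ⟨seq j, (hmemC _).mpr ⟨j, h2, rfl⟩, rfl⟩
  have himy' : C.image y' = insert w D := by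
    ext x
    simp only [Finset.mem_image, Finset.mem_insert, hDmem]
    constructor
    · rintro ⟨i, hi, rfl⟩
      obtain ⟨j, hj, rfl⟩ := (hmemC i).mp hi
      rcases eq_or_lt_of_le hj with rfl | hj'
      · left; rfl
      · right; exact ⟨j + 1, by omega, by omega, hstep j (halive j hj')⟩
    · rintro (rfl | ⟨j, h1, h2, rfl⟩)
      · exact ⟨seq n, (hmemC _).mpr ⟨n, le_refl _, rfl⟩, rfl⟩
      · obtain ⟨r, rfl⟩ : ∃ r, j = r + 1 := ⟨j - 1, by omega⟩
        exact ⟨seq r, (hmemC _).mpr ⟨r, by omega, rfl⟩, (hstep r (halive r (by omega))).symm⟩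
  have hmD : m ∉ D := by
    intro hc
    obtain ⟨j, h1, h2, hj⟩ := (hDmem m).mp hc
    have : seq j = seq 0 := hy (by rw [hj, hseq0, hi0])
    have := distC j h2 0 (by omega) this
    omega
  have hwD : w ∉ D := by
    intro hc
    obtain ⟨j, h1, h2, hj⟩ := (hDmem w).mp hc
    exact hwS (Finset.mem_image.mpr ⟨seq j, Finset.mem_univ _, hj⟩)
  -- sum exchange over the chain
  have hinjC : ∀ x ∈ C, ∀ x' ∈ C, y x = y x' → x = x' := fun x _ x' _ h => hy h
  have hinjC' : ∀ x ∈ C, ∀ x' ∈ C, y' x = y' x' → x = x' := fun x _ x' _ h => hy' h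
  have hsumy : ∑ i ∈ C, y i = m + ∑ x ∈ D, x := by
    have h1 : ∑ x ∈ C.image y, (id x : ℕ) = ∑ i ∈ C, id (y i) :=
      Finset.sum_image hinjC
    simp only [id] at h1
    rw [← h1, himy, Finset.sum_insert hmD]
  have hsumy' : ∑ i ∈ C, y' i = w + ∑ x ∈ D, x := by
    have h1 : ∑ x ∈ C.image y', (id x : ℕ) = ∑ i ∈ C, id (y' i) :=
      Finset.sum_image hinjC'
    simp only [id] at h1
    rw [← h1, himy', Finset.sum_insert hwD]
  -- the improved assignment
  set z : Fin k → ℕ := fun i => if i ∈ C then y' i else y i with hz_def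
  have hmix : ∀ i ∈ C, ∀ i' , i' ∉ C → y' i ≠ y i' := by
    intro i hi i' hi' heq
    obtain ⟨j, hj, rfl⟩ := (hmemC i).mp hi
    by_cases hA : Alive j
    · have hjn : j ≠ n := fun h => hn (h ▸ hA)
      have h1 : y (seq (j + 1)) = y' (seq j) := hstep j hA
      have : i' = seq (j + 1) := hy (by rw [h1, heq])
      exact hi' (this ▸ (hmemC _).mpr ⟨j + 1, by omega, rfl⟩)
    · exact hA ⟨i', heq.symm⟩
  have hz_inj : Function.Injective z := by
    intro i i' heq
    simp only [hz_def] at heq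
    by_cases h1 : i ∈ C <;> by_cases h2 : i' ∈ C
    · rw [if_pos h1, if_pos h2] at heq; exact hy' heq
    · rw [if_pos h1, if_neg h2] at heq; exact absurd heq (hmix i h1 i' h2)
    · rw [if_neg h1, if_pos h2] at heq; exact absurd heq.symm (hmix i' h2 i h1)
    · rw [if_neg h1, if_neg h2] at heq; exact hy heq
  have hz_a : ∀ i, a i ≤ z i := by
    intro i
    simp only [hz_def]
    split
    · exact ha' i
    · exact ha i
  have hsplit : ∀ f : Fin k → ℕ, ∑ i, f i = ∑ i ∈ C, f i + ∑ i ∈ Cᶜ, f i := by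
    intro f
    rw [Finset.sum_add_sum_compl]
  have hzC : ∑ i ∈ C, z i = ∑ i ∈ C, y' i :=
    Finset.sum_congr rfl (fun i hi => by simp [hz_def, hi])
  have hzCc : ∑ i ∈ Cᶜ, z i = ∑ i ∈ Cᶜ, y i :=
    Finset.sum_congr rfl (fun i hi => by
      simp only [hz_def, if_neg (Finset.mem_compl.mp hi)])
  have hsum_z : ∑ i, z i + m = ∑ i, y i + w := by
    rw [hsplit z, hsplit y, hzC, hzCc, hsumy, hsumy']
    omega
  have := hmin z hz_inj hz_a
  omega

/-- All min-sum minimizers among injective feasible slot assignments use the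
same set of slots. -/
theorem stmt_11 (k : ℕ) (a : Fin k → ℕ) (y y' : Fin k → ℕ)
    (hy : Function.Injective y) (hy' : Function.Injective y')
    (ha : ∀ i, a i ≤ y i) (ha' : ∀ i, a i ≤ y' i)
    (hmin : ∀ z : Fin k → ℕ, Function.Injective z → (∀ i, a i ≤ z i) →
      ∑ i, y i ≤ ∑ i, z i)
    (hmin' : ∀ z : Fin k → ℕ, Function.Injective z → (∀ i, a i ≤ z i) →
      ∑ i, y' i ≤ ∑ i, z i) :
    Finset.univ.image y = Finset.univ.image y' := by
  classical
  by_contra hne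
  set S := Finset.univ.image y with hS_def
  set T := Finset.univ.image y' with hT_def
  set U := (S \ T) ∪ (T \ S) with hU_def
  have hU : U.Nonempty := by
    rw [Finset.nonempty_iff_ne_empty]
    intro hc
    apply hne
    have h1 : S \ T = ∅ := Finset.union_eq_empty.mp hc |>.1
    have h2 : T \ S = ∅ := Finset.union_eq_empty.mp hc |>.2
    exact le_antisymm (Finset.sdiff_eq_empty_iff_subset.mp h1)
      (Finset.sdiff_eq_empty_iff_subset.mp h2)
  set m := U.max' hU with hm_def
  have hmU : m ∈ U := Finset.max'_mem _ _
  have hle : ∀ t ∈ U, t ≤ m := fun t ht => Finset.le_max' _ _ ht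
  rcases Finset.mem_union.mp hmU with hm | hm
  · obtain ⟨hmS, hmT⟩ := Finset.mem_sdiff.mp hm
    refine key_exchange a y y' hy hy' ha ha' hmin m hmS hmT ?_
    intro t ht htS
    have htU : t ∈ U := Finset.mem_union_right _ (Finset.mem_sdiff.mpr ⟨ht, htS⟩)
    exact lt_of_le_of_ne (hle t htU) (fun h => htS (h ▸ hmS))
  · obtain ⟨hmT, hmS⟩ := Finset.mem_sdiff.mp hm
    refine key_exchange a y' y hy' hy ha' ha hmin' m hmT hmS ?_
    intro t ht htT
    have htU : t ∈ U := Finset.mem_union_left _ (Finset.mem_sdiff.mpr ⟨ht, htT⟩)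
    exact lt_of_le_of_ne (hle t htU) (fun h => htT (h ▸ hmT))
end

section
/- Let a_1,...,a_k ∈ ℤ≥0. Among injective functions y : [k] → ℤ≥0 with y(i) ≥ a_i for all i, a minimizer of ∑_i y(i) exists, and the greedy procedure that repeatedly assigns the smallest unused slot s ≥ min of the remaining a_i's to some remaining trip i with a_i ≤ s produces such a minimizer. -/
/-- A min-sum minimizer among injective feasible slot assignments exists, and
any assignment produced by the greedy procedure (repeatedly assign the smallest
unused slot `s` that is at least the minimum of the remaining `aᵢ`'s, to some
remaining trip `i` with `aᵢ ≤ s`) is such a minimizer. -/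
theorem stmt_12 (k : ℕ) (a : Fin k → ℕ) :
    (∃ y : Fin k → ℕ, (Function.Injective y ∧ ∀ i, a i ≤ y i) ∧
      ∀ y' : Fin k → ℕ, Function.Injective y' → (∀ i, a i ≤ y' i) →
        ∑ i, y i ≤ ∑ i, y' i) ∧
    (∀ (y : Fin k → ℕ) (σ : Equiv.Perm (Fin k)),
      (∀ t : Fin k,
        IsLeast {s : ℕ |
            (∃ i : Fin k, (∀ t' : Fin k, t' < t → σ t' ≠ i) ∧ a i ≤ s) ∧
            ∀ t' : Fin k, t' < t → y (σ t') ≠ s}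
          (y (σ t)) ∧
        a (σ t) ≤ y (σ t)) →
      (Function.Injective y ∧ ∀ i, a i ≤ y i) ∧
        ∀ y' : Fin k → ℕ, Function.Injective y' → (∀ i, a i ≤ y' i) →
          ∑ i, y i ≤ ∑ i, y' i) := by
  constructor
  · -- existence of a minimizer, via well-ordering of ℕ
    set M := Finset.univ.sup a with hM
    have hfeas : ∃ y : Fin k → ℕ, Function.Injective y ∧ ∀ i, a i ≤ y i := by
      refine ⟨fun i => M + i.val, ?_, ?_⟩
      · intro i j hij
        simp only at hij
        exact Fin.ext (by omega)
      · intro i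
        exact le_trans (Finset.le_sup (Finset.mem_univ i)) (Nat.le_add_right _ _)
    set T : Set ℕ := {n | ∃ y : Fin k → ℕ,
      (Function.Injective y ∧ ∀ i, a i ≤ y i) ∧ ∑ i, y i = n} with hT
    have hTne : T.Nonempty := by
      obtain ⟨y, h1, h2⟩ := hfeas
      exact ⟨∑ i, y i, y, ⟨h1, h2⟩, rfl⟩
    obtain ⟨y, hy, hsum⟩ := Nat.sInf_mem hTne
    exact ⟨y, hy, fun y' h1 h2 => hsum ▸ Nat.sInf_le ⟨y', ⟨h1, h2⟩, rfl⟩⟩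
  · intro y σ h
    -- the greedy values are strictly increasing along σ
    have hmono : ∀ t1 t2 : Fin k, t1 < t2 → y (σ t1) < y (σ t2) := by
      intro t1 t2 hlt
      obtain ⟨⟨i, hi1, hi2⟩, hne⟩ := (h t2).1.1
      have mem1 : y (σ t2) ∈ {s : ℕ |
          (∃ i : Fin k, (∀ t' : Fin k, t' < t1 → σ t' ≠ i) ∧ a i ≤ s) ∧
          ∀ t' : Fin k, t' < t1 → y (σ t') ≠ s} :=
        ⟨⟨i, fun t' ht' => hi1 t' (ht'.trans hlt), hi2⟩,
          fun t' ht' => hne t' (ht'.trans hlt)⟩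
      have hle := (h t1).1.2 mem1
      exact lt_of_le_of_ne hle (fun heq => hne t1 hlt heq)
    have hyinj : Function.Injective y := by
      intro i j hij
      rcases lt_trichotomy (σ.symm i) (σ.symm j) with h' | h' | h'
      · have := hmono _ _ h'
        rw [Equiv.apply_symm_apply, Equiv.apply_symm_apply, hij] at this
        omega
      · exact σ.symm.injective h'
      · have := hmono _ _ h'
        rw [Equiv.apply_symm_apply, Equiv.apply_symm_apply, hij] at this
        omega
    have hyfeas : ∀ i, a i ≤ y i := by
      intro i
      have := (h (σ.symm i)).2
      simpa using this
    refine ⟨⟨hyinj, hyfeas⟩, ?_⟩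
    intro y' hinj' hfeas'
    set τ := Tuple.sort y' with hτ
    set w : Fin k → ℕ := y' ∘ τ with hw
    have hwmono : Monotone w := Tuple.monotone_sort y'
    have hwinj : Function.Injective w := hinj'.comp τ.injective
    have hwsm : StrictMono w := hwmono.strictMono_of_injective hwinj
    have key : ∀ n : ℕ, ∀ t : Fin k, (t : ℕ) = n → y (σ t) ≤ w t := by
      intro n
      induction n using Nat.strong_induction_on with
      | _ n ih =>
        intro t ht
        have ihf : ∀ t' : Fin k, t' < t → y (σ t') ≤ w t' := by
          intro t' h'
          exact ih t'.val (by omega) t' rfl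
        -- pigeonhole: some trip τ j, j ≤ t, is unassigned before step t
        have hcard : ((Finset.Iio t).image σ).card < ((Finset.Iic t).image τ).card := by
          rw [Finset.card_image_of_injective _ σ.injective,
            Finset.card_image_of_injective _ τ.injective,
            Fin.card_Iio, Fin.card_Iic]
          omega
        have hns : ¬ (Finset.Iic t).image τ ⊆ (Finset.Iio t).image σ :=
          fun hsub => absurd (Finset.card_le_card hsub) (by omega)
        obtain ⟨i, hiB, hiA⟩ := Finset.not_subset.1 hns
        obtain ⟨j, hj, rfl⟩ := Finset.mem_image.1 hiB
        have hjle : j ≤ t := Finset.mem_Iic.1 hj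
        have haj : a (τ j) ≤ w t := le_trans (hfeas' (τ j)) (hwmono hjle)
        have hunassigned : ∀ t' : Fin k, t' < t → σ t' ≠ τ j := by
          intro t' h' heq
          exact hiA (Finset.mem_image.2 ⟨t', Finset.mem_Iio.2 h', heq⟩)
        have hneq : ∀ t' : Fin k, t' < t → y (σ t') ≠ w t := by
          intro t' h'
          exact ne_of_lt (lt_of_le_of_lt (ihf t' h') (hwsm h'))
        exact (h t).1.2 ⟨⟨τ j, hunassigned, haj⟩, hneq⟩
    calc ∑ i, y i = ∑ t, y (σ t) := (Equiv.sum_comp σ y).symm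
      _ ≤ ∑ t, w t := Finset.sum_le_sum (fun t _ => key t.val t rfl)
      _ = ∑ i, y' i := Equiv.sum_comp τ y'
end

section
/- Suppose two walks in a directed acyclic graph both pass through vertices u and v, and each walk uses a shortest path between u and v (with respect to positive integer arc lengths). If both walks visit u before v, then the length of the segment from u to v is the same in both walks. Consequently, for delays δ_1, δ_2 satisfying δ_1 + λ(W_1, u) = d + λ(W, u) and δ_2 + λ(W_1, v) = d + λ(W, v) for some fixed walk W and delay d, we have δ_1 = δ_2. -/
/-- Length of a walk (list of vertices) up to its `j`-th arc: the sum of the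
lengths of the first `j` arcs. -/
def lamTo {V : Type*} (w : V → V → ℕ) (W : List V) (j : ℕ) : ℕ :=
  (((W.zip W.tail).take j).map fun p => w p.1 p.2).sum

namespace List

variable {α : Type*}

theorem drop_zip_tail (l : List α) (n : ℕ) :
    (l.zip l.tail).drop n = (l.drop n).zip (l.drop n).tail := by
  simp only [zip, drop_zipWith, tail_drop, drop_tail]

theorem take_zip_tail (l : List α) (n : ℕ) :
    (l.zip l.tail).take n = (l.take (n + 1)).zip (l.take (n + 1)).tail := by
  refine ext_getElem? fun i => ?_
  simp only [getElem?_take, zip_eq_zipWith, getElem?_zipWith, getElem?_tail]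
  split_ifs <;> first | rfl | omega | simp

end List

section Walks

variable {V : Type*} (w : V → V → ℕ)

theorem lamTo_add (l : List V) (a j : ℕ) :
    lamTo w l (a + j) = lamTo w l a + lamTo w (l.drop a) j := by
  rw [lamTo, lamTo, lamTo, ← List.drop_zip_tail, List.take_add, List.map_append,
    List.sum_append]

theorem lamTo_take_succ (l : List V) (n : ℕ) :
    lamTo w (l.take (n + 1)) n = lamTo w l n := by
  rw [lamTo, lamTo, ← List.take_zip_tail, List.take_take, min_self]

theorem exists_isChain_segment {E : V → V → Prop} {W : List V} (hW : W.IsChain E)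
    {u v : V} {i j : ℕ} (hij : i ≤ j) (hu : W[i]? = some u) (hv : W[j]? = some v) :
    ∃ Q : List V, Q.IsChain E ∧ Q.head? = some u ∧ Q.getLast? = some v ∧
      lamTo w W i + lamTo w Q (Q.length - 1) = lamTo w W j := by
  have hj : j < W.length := (List.getElem?_eq_some_iff.mp hv).1
  set Q := (W.drop i).take (j - i + 1)
  have hlen : Q.length - 1 = j - i := by
    rw [List.length_take, List.length_drop]
    omega
  refine ⟨Q, (hW.drop i).take _, ?_, ?_, ?_⟩
  · rw [List.head?_eq_getElem?, List.getElem?_take_of_lt (by omega), List.getElem?_drop,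
      Nat.add_zero, hu]
  · rw [List.getLast?_eq_getElem?, hlen, List.getElem?_take_of_lt (by omega),
      List.getElem?_drop, Nat.add_sub_cancel' hij, hv]
  · rw [hlen, lamTo_take_succ, ← lamTo_add, Nat.add_sub_cancel' hij]

end Walks

theorem stmt_16_general {V : Type*} (E : V → V → Prop)
    (w : V → V → ℕ)
    (W₁ W₂ : List V) (h1 : W₁.Chain' E) (h2 : W₂.Chain' E)
    (u v : V) (j1u j1v j2u j2v : ℕ)
    (hj1 : j1u < j1v) (hj2 : j2u < j2v)
    (h1u : W₁[j1u]? = some u) (h1v : W₁[j1v]? = some v)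
    (h2u : W₂[j2u]? = some u) (h2v : W₂[j2v]? = some v)
    (hshort1 : ∀ Q : List V, Q.Chain' E → Q.head? = some u → Q.getLast? = some v →
      lamTo w W₁ j1v - lamTo w W₁ j1u ≤ lamTo w Q (Q.length - 1))
    (hshort2 : ∀ Q : List V, Q.Chain' E → Q.head? = some u → Q.getLast? = some v →
      lamTo w W₂ j2v - lamTo w W₂ j2u ≤ lamTo w Q (Q.length - 1)) :
    lamTo w W₁ j1v - lamTo w W₁ j1u = lamTo w W₂ j2v - lamTo w W₂ j2u ∧
      ∀ δ₁ δ₂ d : ℕ,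
        δ₁ + lamTo w W₁ j1u = d + lamTo w W₂ j2u →
        δ₂ + lamTo w W₁ j1v = d + lamTo w W₂ j2v →
        δ₁ = δ₂ := by
  obtain ⟨Q₁, hQ₁, hu₁, hv₁, hlen₁⟩ := exists_isChain_segment w h1 hj1.le h1u h1v
  obtain ⟨Q₂, hQ₂, hu₂, hv₂, hlen₂⟩ := exists_isChain_segment w h2 hj2.le h2u h2v
  -- each segment is a `u`–`v` walk, so the other walk's shortest-path bound applies to it
  have hle₁ := hshort1 Q₂ hQ₂ hu₂ hv₂
  have hle₂ := hshort2 Q₁ hQ₁ hu₁ hv₁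
  exact ⟨by omega, fun δ₁ δ₂ d hd₁ hd₂ => by omega⟩

/-- In a DAG, if two walks both pass through `u` (before) and `v`, and each uses
a shortest path between `u` and `v`, then the segment lengths agree; consequently
delays satisfying the stated arrival equations are equal. -/
theorem stmt_16 {V : Type*} (E : V → V → Prop)
    (rank : V → ℕ) (hdag : ∀ x y, E x y → rank x < rank y)
    (w : V → V → ℕ) (hw : ∀ x y, E x y → 1 ≤ w x y)
    (W₁ W₂ : List V) (h1 : W₁.Chain' E) (h2 : W₂.Chain' E)
    (u v : V) (j1u j1v j2u j2v : ℕ)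
    (hj1 : j1u < j1v) (hj2 : j2u < j2v)
    (h1u : W₁[j1u]? = some u) (h1v : W₁[j1v]? = some v)
    (h2u : W₂[j2u]? = some u) (h2v : W₂[j2v]? = some v)
    (hshort1 : ∀ Q : List V, Q.Chain' E → Q.head? = some u → Q.getLast? = some v →
      lamTo w W₁ j1v - lamTo w W₁ j1u ≤ lamTo w Q (Q.length - 1))
    (hshort2 : ∀ Q : List V, Q.Chain' E → Q.head? = some u → Q.getLast? = some v →
      lamTo w W₂ j2v - lamTo w W₂ j2u ≤ lamTo w Q (Q.length - 1)) :
    lamTo w W₁ j1v - lamTo w W₁ j1u = lamTo w W₂ j2v - lamTo w W₂ j2u ∧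
      ∀ δ₁ δ₂ d : ℕ,
        δ₁ + lamTo w W₁ j1u = d + lamTo w W₂ j2u →
        δ₂ + lamTo w W₁ j1v = d + lamTo w W₂ j2v →
        δ₁ = δ₂ :=
  stmt_16_general E w W₁ W₂ h1 h2 u v j1u j1v j2u j2v hj1 hj2 h1u h1v h2u h2v hshort1 hshort2
end
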